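/- Let G be a finite connected simple graph with vertex set {v_1,…,v_n}, and let Ĝ be the split VPT graph constructed from G as follows: the host tree T is a star with center q and leaves y_1,…,y_n; the path family consists of a one-vertex path P_i = {y_i} for each 1≤i≤n, a path P_{ij} = {y_i,q,y_j} for each pair i<j with v_iv_j∈E(G), and a path P_{iq} = {q,y_i} for each i with d_G(v_i)=1; Ĝ is the vertex intersection graph of this path family. Then for every h ≥ 4, Ĝ belongs to [h,2,1] but not to [h−1,2,1] if and only if the chromatic number χ(G) equals h. -/

import Mathlib

/-!
A proper `k`-colouring of `G` gives a representation of `Ĝ` on a spider with one leg per colour: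
`vᵢ` gets a leaf `yᵢ` attached to the `i`-th vertex of the leg of its colour, `Pᵢ = {yᵢ}`, and a
path through the centre is the union of the root paths of its one or two leaves. These meet
only at the root since adjacent vertices have different colours; the root has degree `k` and
every other vertex degree at most `3`.

Conversely, take a representation on a tree of maximum degree `k`. The paths through the centre
form a clique, so by the Helly property of subtrees they share a vertex `p`. Unless one vertex of
`G` meets every edge (and then `χ(G) ≤ 2`), no `Pᵢ` contains `p`, so `Pᵢ` lies in one branch at `p`;
colouring `vᵢ` by the neighbour of `p` leading into that branch is proper, because two adjacent
vertices in one branch would force a vertex of degree three on the path of their edge.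

So for `h ≥ 3` the graph `Ĝ` lies in `[h,2,1]` exactly when `χ(G) ≤ h`.
-/

open SimpleGraph

/-- `S` induces a path (a nonempty connected subgraph with maximum degree at most 2,
i.e. a subtree which is a path when `T` is a tree) in the graph `T`. -/
def IsPathSet {W : Type*} (T : SimpleGraph W) (S : Set W) : Prop :=
  S.Nonempty ∧
  (∀ x ∈ S, ∀ y ∈ S, ∃ p : T.Walk x y, ∀ z ∈ p.support, z ∈ S) ∧
  (∀ x ∈ S, (T.neighborSet x ∩ S).ncard ≤ 2)

/-- A VPT-representation of `G` on host tree `T`: a family of paths of the tree `T`,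
one for each vertex of `G`, such that two distinct vertices of `G` are adjacent iff
the corresponding paths share a vertex. -/
structure VPTRep {V W : Type*} (G : SimpleGraph V) (T : SimpleGraph W) where
  tree : T.IsTree
  path : V → Set W
  isPath : ∀ v, IsPathSet T (path v)
  adj_iff : ∀ u v : V, u ≠ v → (G.Adj u v ↔ (path u ∩ path v).Nonempty)

/-- `G` is a VPT graph: it has a VPT-representation on some finite host tree. -/
def IsVPT {V : Type*} (G : SimpleGraph V) : Prop :=
  ∃ (n : ℕ) (T : SimpleGraph (Fin n)), Nonempty (VPTRep G T)

/-- `G` belongs to the class [h,2,1]: it has a VPT-representation whose host tree has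
maximum degree at most `h`. -/
def MemH21 {V : Type*} (G : SimpleGraph V) (h : ℕ) : Prop :=
  ∃ (n : ℕ) (T : SimpleGraph (Fin n)) (_ : VPTRep G T),
    ∀ x : Fin n, (T.neighborSet x).ncard ≤ h

/-- `C` is a clique of `G`: a maximal set of pairwise adjacent vertices. -/
def IsMaxClique {V : Type*} (G : SimpleGraph V) (C : Set V) : Prop :=
  G.IsClique C ∧ ∀ D, G.IsClique D → C ⊆ D → D = C

/-- The branch graph `B(G/C)`, as a graph on the vertex set of `G`; its relevant
vertices are those of `branchVerts G C`, all others are isolated. -/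
def branchGraph {V : Type*} (G : SimpleGraph V) (C : Set V) : SimpleGraph V where
  Adj v w := v ∉ C ∧ w ∉ C ∧ v ≠ w ∧ ¬ G.Adj v w ∧
    (∃ u ∈ C, G.Adj u v ∧ G.Adj u w) ∧
    (∃ v' ∈ C, G.Adj v' v ∧ ¬ G.Adj v' w) ∧
    (∃ w' ∈ C, G.Adj w' w ∧ ¬ G.Adj w' v)
  symm := ⟨by
    rintro v w ⟨h1, h2, h3, h4, ⟨u, hu, hu1, hu2⟩, ⟨v', hv', hv1, hv2⟩, ⟨w', hw', hw1, hw2⟩⟩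
    exact ⟨h2, h1, h3.symm, fun hadj => h4 hadj.symm, ⟨u, hu, hu2, hu1⟩,
      ⟨w', hw', hw1, hw2⟩, ⟨v', hv', hv1, hv2⟩⟩⟩
  loopless := ⟨by rintro v ⟨_, _, h, _⟩; exact h rfl⟩

/-- The vertex set of the branch graph `B(G/C)`: vertices outside `C` adjacent to
some vertex of `C`. -/
def branchVerts {V : Type*} (G : SimpleGraph V) (C : Set V) : Set V :=
  {v | v ∉ C ∧ ∃ u ∈ C, G.Adj u v}

/-- `B` is a branch of `T` at `q`: a connected component of `T - q`, i.e. the set of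
vertices reachable from some neighbor `y` of `q` by a walk avoiding `q`. -/
def BranchAt {W : Type*} (T : SimpleGraph W) (q : W) (B : Set W) : Prop :=
  ∃ y, T.Adj q y ∧ B = {x | ∃ p : T.Walk y x, q ∉ p.support}

/-- `(S, K)` is a split partition of `G`: `S` is a stable set, `K` is a complete set,
and they partition the vertices. -/
def IsSplitPartition {V : Type*} (G : SimpleGraph V) (S K : Set V) : Prop :=
  (∀ v, v ∈ S ∨ v ∈ K) ∧ Disjoint S K ∧
  (∀ a ∈ S, ∀ b ∈ S, ¬ G.Adj a b) ∧ G.IsClique K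

/-- The vertex intersection graph of a family of sets `f`. -/
def interGraph {I W : Type*} (f : I → Set W) : SimpleGraph I where
  Adj u v := u ≠ v ∧ (f u ∩ f v).Nonempty
  symm := ⟨by
    rintro u v ⟨h1, h2⟩
    exact ⟨h1.symm, by rwa [Set.inter_comm]⟩⟩
  loopless := ⟨by rintro u ⟨h, _⟩; exact h rfl⟩

/-- Index type for the path family of the graph `Ĝ` built from `G`:
`Sum.inl i` is the one-vertex path `Pᵢ = {yᵢ}`; `Sum.inr (Sum.inl ⟨(i,j),_⟩)` is the
path `Pᵢⱼ = {yᵢ, q, yⱼ}` for an edge `vᵢvⱼ` with `i < j`; `Sum.inr (Sum.inr ⟨i,_⟩)` is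
the path `P_{iq} = {q, yᵢ}` for a vertex `vᵢ` of degree 1. -/
abbrev HatIdx (n : ℕ) (G : SimpleGraph (Fin n)) : Type :=
  Fin n ⊕ ({p : Fin n × Fin n // p.1 < p.2 ∧ G.Adj p.1 p.2} ⊕
    {i : Fin n // (G.neighborSet i).ncard = 1})

/-- The path family on the star host tree: the tree has center `q = none` and
leaves `yᵢ = some i`. -/
def hatPath (n : ℕ) (G : SimpleGraph (Fin n)) : HatIdx n G → Set (Option (Fin n))
  | Sum.inl i => {some i}
  | Sum.inr (Sum.inl p) => {some p.1.1, none, some p.1.2}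
  | Sum.inr (Sum.inr i) => {none, some i.1}

/-- The graph `Ĝ` built from `G`: the vertex intersection graph of the above path
family in the star tree. -/
def hatG (n : ℕ) (G : SimpleGraph (Fin n)) : SimpleGraph (HatIdx n G) :=
  interGraph (hatPath n G)

/-- The central clique `C_q` of `Ĝ`: all paths containing the center `q = none`. -/
def hatCq (n : ℕ) (G : SimpleGraph (Fin n)) : Set (HatIdx n G) :=
  {u | none ∈ hatPath n G u}

namespace SimpleGraph

variable {W : Type*} {T : SimpleGraph W} {x y z : W}

/-- In a tree this says that `z` lies on the path from `x` to `y`. -/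
def IsBetween (T : SimpleGraph W) (x z y : W) : Prop :=
  ∀ w : T.Walk x y, z ∈ w.support

/-- In a tree these are the vertex sets of subtrees. -/
def IsConvex (T : SimpleGraph W) (S : Set W) : Prop :=
  ∀ ⦃x z y⦄, x ∈ S → y ∈ S → T.IsBetween x z y → z ∈ S

lemma isBetween_left : T.IsBetween x x y := fun w => w.start_mem_support

lemma not_isBetween_of_walks {u : W} (wx : T.Walk u x) (wy : T.Walk u y)
    (hx : z ∉ wx.support) (hy : z ∉ wy.support) : ¬ T.IsBetween x z y := fun h => by
  have := h (wx.reverse.append wy)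
  rw [Walk.mem_support_append_iff, Walk.support_reverse, List.mem_reverse] at this
  tauto

lemma IsConvex.inter {S S' : Set W} (hS : T.IsConvex S) (hS' : T.IsConvex S') :
    T.IsConvex (S ∩ S') := fun _ _ _ hx hy h => ⟨hS hx.1 hy.1 h, hS' hx.2 hy.2 h⟩

lemma IsAcyclic.support_subset_of_isPath (hT : T.IsAcyclic) {p : T.Walk x y} (hp : p.IsPath)
    (q : T.Walk x y) : p.support ⊆ q.support := by
  classical
  have : q.bypass = p :=
    congrArg Subtype.val
      ((hT.subsingleton_path x y).elim ⟨q.bypass, q.bypass_isPath⟩ ⟨p, hp⟩)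
  exact this ▸ q.support_bypass_subset_support

lemma IsAcyclic.isBetween_of_mem_support (hT : T.IsAcyclic) {p : T.Walk x y} (hp : p.IsPath)
    (hz : z ∈ p.support) : T.IsBetween x z y := fun q =>
  hT.support_subset_of_isPath hp q hz

lemma IsTree.exists_isPath (hT : T.IsTree) (x y : W) : ∃ p : T.Walk x y, p.IsPath :=
  (hT.existsUnique_path x y).exists

lemma IsTree.exists_adj_isBetween (hT : T.IsTree) (hx : x ≠ z) :
    ∃ u, T.Adj z u ∧ T.IsBetween z u x ∧ ∃ w : T.Walk u x, z ∉ w.support := by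
  obtain ⟨p, hp⟩ := hT.exists_isPath z x
  cases p with
  | nil => exact absurd rfl hx
  | cons h w =>
    exact ⟨_, h, hT.isAcyclic.isBetween_of_mem_support hp (by simp),
      w, ((Walk.cons_isPath_iff _ _).mp hp).2⟩

lemma IsTree.exists_median (hT : T.IsTree) (a b c : W) :
    ∃ m, T.IsBetween a m b ∧ T.IsBetween b m c ∧ T.IsBetween a m c := by
  classical
  obtain ⟨Q, hQ⟩ := hT.exists_isPath a b
  induction Q with
  | nil => exact ⟨_, isBetween_left, isBetween_left, isBetween_left⟩
  | @cons a a' b hadj Q ih =>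
    obtain ⟨m, hm_ab, hm_bc, hm_ac⟩ := ih ((Walk.cons_isPath_iff _ _).mp hQ).1
    by_cases hbac : T.IsBetween b a c
    · exact ⟨a, isBetween_left, hbac, isBetween_left⟩
    refine ⟨m, hT.isAcyclic.isBetween_of_mem_support hQ
      (List.mem_cons_of_mem _ (hm_ab Q)), hm_bc, ?_⟩
    -- `a` is avoided by `Q` and by some `b`-`c` walk, hence by the path from `a'` to `c`.
    obtain ⟨w, hw⟩ : ∃ w : T.Walk b c, a ∉ w.support := by simpa [IsBetween] using hbac
    set R := (Q.append w).bypass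
    have haR : a ∉ R.support := fun h => by
      have := (Q.append w).support_bypass_subset_support h
      rw [Walk.mem_support_append_iff] at this
      exact this.elim ((Walk.cons_isPath_iff _ _).mp hQ).2 hw
    exact hT.isAcyclic.isBetween_of_mem_support (p := .cons hadj R)
      ((Walk.cons_isPath_iff _ _).mpr ⟨(Q.append w).bypass_isPath, haR⟩)
      (List.mem_cons_of_mem _ (hm_ac R))

lemma IsTree.inter_inter_nonempty (hT : T.IsTree) {A B C : Set W} (hA : T.IsConvex A)
    (hB : T.IsConvex B) (hC : T.IsConvex C) (hAB : (A ∩ B).Nonempty) (hAC : (A ∩ C).Nonempty)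
    (hBC : (B ∩ C).Nonempty) : (A ∩ B ∩ C).Nonempty := by
  obtain ⟨c, hcA, hcB⟩ := hAB
  obtain ⟨b, hbA, hbC⟩ := hAC
  obtain ⟨a, haB, haC⟩ := hBC
  obtain ⟨m, hab, hbc, hac⟩ := hT.exists_median a b c
  exact ⟨m, ⟨hA hbA hcA hbc, hB haB hcB hac⟩, hC haC hbC hab⟩

lemma IsTree.exists_forall_mem_of_isConvex (hT : T.IsTree) {ι : Type*} {s : Finset ι}
    (hs : s.Nonempty) (f : ι → Set W) (hf : ∀ i ∈ s, T.IsConvex (f i))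
    (hpair : ∀ i ∈ s, ∀ j ∈ s, (f i ∩ f j).Nonempty) : ∃ p, ∀ i ∈ s, p ∈ f i := by
  induction hs using Finset.Nonempty.cons_induction generalizing f with
  | singleton i =>
    obtain ⟨p, hp, -⟩ := hpair i (by simp) i (by simp)
    exact ⟨p, by simpa using hp⟩
  | cons i s hi hs ih =>
    have hi' : i ∈ Finset.cons i s hi := Finset.mem_cons_self i s
    have hs' {j} (hj : j ∈ s) : j ∈ Finset.cons i s hi := Finset.mem_cons_of_mem hj
    obtain ⟨p, hp⟩ := ih (fun j => f j ∩ f i)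
      (fun j hj => (hf j (hs' hj)).inter (hf i hi'))
      (fun j hj j' hj' => by
        obtain ⟨z, ⟨hzj, hzj'⟩, hzi⟩ := hT.inter_inter_nonempty (hf j (hs' hj))
          (hf j' (hs' hj')) (hf i hi') (hpair j (hs' hj) j' (hs' hj'))
          (hpair j (hs' hj) i hi') (hpair j' (hs' hj') i hi')
        exact ⟨z, ⟨hzj, hzi⟩, hzj', hzi⟩)
    obtain ⟨j, hj⟩ := hs
    refine ⟨p, fun i' hi' => ?_⟩
    rcases Finset.mem_cons.mp hi' with rfl | hi'
    · exact (hp j hj).2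
    · exact (hp i' hi').1

end SimpleGraph

namespace IsPathSet

variable {W : Type*} {T : SimpleGraph W} {S : Set W}

lemma isConvex (hS : IsPathSet T S) : T.IsConvex S := fun x _ y hx hy h => by
  obtain ⟨w, hw⟩ := hS.2.1 x hx y hy
  exact hw _ (h w)

lemma exists_adj_forall_walk (hT : T.IsTree) (hS : IsPathSet T S) {p : W} (hp : p ∉ S) :
    ∃ y, T.Adj p y ∧ ∀ x ∈ S, ∃ w : T.Walk y x, p ∉ w.support := by
  obtain ⟨x₀, hx₀⟩ := hS.1
  obtain ⟨y, hy, -, w₀, hw₀⟩ := hT.exists_adj_isBetween (ne_of_mem_of_not_mem hx₀ hp)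
  refine ⟨y, hy, fun x hx => ?_⟩
  obtain ⟨w, hw⟩ := hS.2.1 x₀ hx₀ x hx
  refine ⟨w₀.append w, fun h => ?_⟩
  rw [Walk.mem_support_append_iff] at h
  exact h.elim hw₀ fun h => hp (hw p h)

/-- Otherwise the median of the three points would have three neighbours in the path. -/
lemma isBetween_trichotomy [Finite W] (hT : T.IsTree) (hS : IsPathSet T S) {a b c : W}
    (ha : a ∈ S) (hb : b ∈ S) (hc : c ∈ S) :
    T.IsBetween b a c ∨ T.IsBetween a b c ∨ T.IsBetween a c b := by
  obtain ⟨m, hab, hbc, hac⟩ := hT.exists_median a b c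
  by_cases hma : m = a
  · exact Or.inl (hma ▸ hbc)
  by_cases hmb : m = b
  · exact Or.inr (Or.inl (hmb ▸ hac))
  by_cases hmc : m = c
  · exact Or.inr (Or.inr (hmc ▸ hab))
  exfalso
  have hm : m ∈ S := hS.isConvex ha hb hab
  obtain ⟨ua, hua, hmua, wa, hwa⟩ := hT.exists_adj_isBetween (Ne.symm hma)
  obtain ⟨ub, hub, hmub, wb, hwb⟩ := hT.exists_adj_isBetween (Ne.symm hmb)
  obtain ⟨uc, huc, hmuc, wc, hwc⟩ := hT.exists_adj_isBetween (Ne.symm hmc)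
  have hne : ∀ {x y u v : W} (wx : T.Walk u x) (wy : T.Walk v y), m ∉ wx.support →
      m ∉ wy.support → T.IsBetween x m y → u ≠ v := by
    rintro x y u v wx wy hwx hwy hxy rfl
    exact not_isBetween_of_walks wx wy hwx hwy hxy
  have hsub : ({ua, ub, uc} : Set W) ⊆ T.neighborSet m ∩ S := by
    rintro u (rfl | rfl | rfl)
    · exact ⟨hua, hS.isConvex hm ha hmua⟩
    · exact ⟨hub, hS.isConvex hm hb hmub⟩
    · exact ⟨huc, hS.isConvex hm hc hmuc⟩
  have h3 : ({ua, ub, uc} : Set W).ncard = 3 :=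
    Set.ncard_eq_three.mpr ⟨ua, ub, uc, hne wa wb hwa hwb hab, hne wa wc hwa hwc hac,
      hne wb wc hwb hwc hbc, rfl⟩
  have := (h3.symm.le.trans (Set.ncard_le_ncard hsub)).trans (hS.2.2 m hm)
  omega

lemma _root_.isPathSet_singleton (T : SimpleGraph W) (x : W) : IsPathSet T {x} :=
  ⟨Set.singleton_nonempty x, by rintro _ rfl _ rfl; exact ⟨.nil, by simp⟩, fun _ _ =>
    (Set.ncard_le_ncard Set.inter_subset_right (Set.finite_singleton x)).trans (by simp)⟩

lemma image_iso {W' : Type*} {T' : SimpleGraph W'} (φ : T ≃g T') (hS : IsPathSet T S) :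
    IsPathSet T' (φ '' S) := by
  refine ⟨hS.1.image φ, ?_, ?_⟩
  · rintro _ ⟨x, hx, rfl⟩ _ ⟨y, hy, rfl⟩
    obtain ⟨w, hw⟩ := hS.2.1 x hx y hy
    refine ⟨w.map φ.toHom, fun z hz => ?_⟩
    rw [SimpleGraph.Walk.support_map, List.mem_map] at hz
    obtain ⟨z, hz, rfl⟩ := hz
    exact ⟨z, hw z hz, rfl⟩
  · rintro _ ⟨x, hx, rfl⟩
    have : T'.neighborSet (φ x) ∩ φ '' S = φ '' (T.neighborSet x ∩ S) := by
      rw [Set.image_inter φ.injective]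
      congr 1
      ext y
      obtain ⟨y, rfl⟩ := φ.surjective y
      simp [φ.injective.mem_set_image, φ.map_adj_iff]
    rw [this, Set.ncard_image_of_injective _ φ.injective]
    exact hS.2.2 x hx

end IsPathSet

lemma VPTRep.memH21 {V W : Type*} [Finite W] {H : SimpleGraph V} {T : SimpleGraph W}
    (R : VPTRep H T) {h : ℕ} (hdeg : ∀ x, (T.neighborSet x).ncard ≤ h) : MemH21 H h := by
  let e := Finite.equivFin W
  let φ := SimpleGraph.Iso.map e T
  refine ⟨_, T.map e.toEmbedding,
    ⟨φ.isTree_iff.mp R.tree, fun v => φ '' R.path v, fun v => (R.isPath v).image_iso φ,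
      fun u v huv => ?_⟩, fun x => ?_⟩
  · rw [← Set.image_inter φ.injective, Set.image_nonempty]
    exact R.adj_iff u v huv
  · obtain ⟨x, rfl⟩ := e.surjective x
    calc _ = (e.toEmbedding '' T.neighborSet x).ncard :=
          congrArg Set.ncard (SimpleGraph.neighborSet_map T e.toEmbedding x)
      _ ≤ h := (Set.ncard_image_of_injective _ e.injective).trans_le (hdeg x)

section HatGraph

variable {n : ℕ} {G : SimpleGraph (Fin n)}

lemma none_mem_hatPath_inr (u) : none ∈ hatPath n G (Sum.inr u) := by
  rcases u with u | u <;> simp [hatPath]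

lemma hatG_adj_inl_inr {i : Fin n} {u} :
    (hatG n G).Adj (Sum.inl i) (Sum.inr u) ↔ some i ∈ hatPath n G (Sum.inr u) := by
  simp [hatG, interGraph, hatPath]

lemma hatG_adj_inr_inr {u v} (huv : u ≠ v) : (hatG n G).Adj (Sum.inr u) (Sum.inr v) :=
  ⟨by simpa using huv, none, none_mem_hatPath_inr u, none_mem_hatPath_inr v⟩

lemma exists_hatPath_eq_of_adj {i j : Fin n} (hij : G.Adj i j) :
    ∃ u, hatPath n G (Sum.inr u) = {some i, none, some j} := by
  rcases lt_or_gt_of_ne hij.ne with hlt | hlt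
  · exact ⟨Sum.inl ⟨(i, j), hlt, hij⟩, rfl⟩
  · refine ⟨Sum.inl ⟨(j, i), hlt, hij.symm⟩, ?_⟩
    simp only [hatPath]
    grind

/-- The pendant path `P_{iq}` if `vᵢ` has degree one, otherwise the path of another edge
at `vᵢ`. -/
lemma exists_hatPath_mem_notMem_of_adj {i j : Fin n} (hij : G.Adj i j) :
    ∃ u, some i ∈ hatPath n G (Sum.inr u) ∧ some j ∉ hatPath n G (Sum.inr u) := by
  by_cases hdeg : (G.neighborSet i).ncard = 1
  · exact ⟨Sum.inr ⟨i, hdeg⟩, by simp [hatPath], by simp [hatPath, hij.ne.symm]⟩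
  obtain ⟨j', hij', hj'⟩ : ∃ j', G.Adj i j' ∧ j' ≠ j := by
    by_contra! h
    exact hdeg (Set.ncard_eq_one.mpr ⟨j, Set.ext fun x => ⟨h x, fun hx => hx ▸ hij⟩⟩)
  obtain ⟨u, hu⟩ := exists_hatPath_eq_of_adj hij'
  exact ⟨u, by simp [hu], by simp [hu, hij.ne.symm, hj'.symm]⟩

end HatGraph

namespace VPTRep

variable {n : ℕ} {G : SimpleGraph (Fin n)} {W : Type*} {T : SimpleGraph W}
  (R : VPTRep (hatG n G) T)

lemma inter_inl_inr_nonempty_iff {i : Fin n} {u} :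
    (R.path (Sum.inl i) ∩ R.path (Sum.inr u)).Nonempty ↔ some i ∈ hatPath n G (Sum.inr u) :=
  (R.adj_iff _ _ Sum.inl_ne_inr).symm.trans hatG_adj_inl_inr

/-- Helly: the paths through the centre `q` form a clique. -/
lemma exists_forall_mem_path_inr {i j : Fin n} (hij : G.Adj i j) :
    ∃ p, ∀ u, p ∈ R.path (Sum.inr u) := by
  classical
  obtain ⟨u₀, -⟩ := exists_hatPath_eq_of_adj hij
  obtain ⟨p, hp⟩ := R.tree.exists_forall_mem_of_isConvex (s := Finset.univ) ⟨u₀, by simp⟩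
    (fun u => R.path (Sum.inr u)) (fun u _ => (R.isPath _).isConvex) fun u _ v _ => by
      rcases eq_or_ne u v with rfl | huv
      · obtain ⟨x, hx⟩ := (R.isPath (Sum.inr u)).1
        exact ⟨x, hx, hx⟩
      · exact (R.adj_iff _ _ (by simpa using huv)).mp (hatG_adj_inr_inr huv)
  exact ⟨p, fun u => hp u (Finset.mem_univ u)⟩

variable {R} {p : W} (hp : ∀ u, p ∈ R.path (Sum.inr u))
include hp

lemma notMem_path_inl {i : Fin n} (hi : ∃ a b, G.Adj a b ∧ i ≠ a ∧ i ≠ b) :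
    p ∉ R.path (Sum.inl i) := fun hpi => by
  obtain ⟨a, b, hab, hia, hib⟩ := hi
  obtain ⟨u, hu⟩ := exists_hatPath_eq_of_adj hab
  have := R.inter_inl_inr_nonempty_iff.mp ⟨p, hpi, hp u⟩
  simp [hu, hia, hib] at this

/-- Helly gives `a ∈ Z ∩ Zᵢ ∩ Pᵢ` and `b ∈ Z ∩ Zⱼ ∩ Pⱼ`, where `Z` is the path of the edge
and `Zᵢ`, `Zⱼ` are central paths missing `Pⱼ`, `Pᵢ`; then none of `p`, `a`, `b` can lie
between the other two on `Z`. -/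
lemma false_of_adj_of_forall_walk [Finite W] {i j : Fin n} (hij : G.Adj i j) {y : W}
    (hi : ∀ x ∈ R.path (Sum.inl i), ∃ w : T.Walk y x, p ∉ w.support)
    (hj : ∀ x ∈ R.path (Sum.inl j), ∃ w : T.Walk y x, p ∉ w.support) : False := by
  have hcvx := fun u => (R.isPath u).isConvex
  obtain ⟨z, hz⟩ := exists_hatPath_eq_of_adj hij
  obtain ⟨zi, hzi_i, hzi_j⟩ := exists_hatPath_mem_notMem_of_adj hij
  obtain ⟨zj, hzj_j, hzj_i⟩ := exists_hatPath_mem_notMem_of_adj hij.symm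
  have hinter {k u} (h : some k ∈ hatPath n G (Sum.inr u)) :
      (R.path (Sum.inr u) ∩ R.path (Sum.inl k)).Nonempty := by
    rw [Set.inter_comm]; exact R.inter_inl_inr_nonempty_iff.mpr h
  obtain ⟨a, ⟨haZ, haZi⟩, haQ⟩ := R.tree.inter_inter_nonempty (hcvx _) (hcvx _) (hcvx _)
    ⟨p, hp z, hp zi⟩ (hinter (by simp [hz])) (hinter hzi_i)
  obtain ⟨b, ⟨hbZ, hbZj⟩, hbQ⟩ := R.tree.inter_inter_nonempty (hcvx _) (hcvx _) (hcvx _)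
    ⟨p, hp z, hp zj⟩ (hinter (by simp [hz])) (hinter hzj_j)
  rcases (R.isPath _).isBetween_trichotomy R.tree (hp z) haZ hbZ with h | h | h
  · obtain ⟨wa, hwa⟩ := hi a haQ
    obtain ⟨wb, hwb⟩ := hj b hbQ
    exact not_isBetween_of_walks wa wb hwa hwb h
  · exact hzj_i (R.inter_inl_inr_nonempty_iff.mp ⟨a, haQ, hcvx _ (hp zj) hbZj h⟩)
  · exact hzi_j (R.inter_inl_inr_nonempty_iff.mp ⟨b, hbQ, hcvx _ (hp zi) haZi h⟩)

end VPTRep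

lemma SimpleGraph.colorable_two_of_forall_adj {V : Type*} {G : SimpleGraph V} {v : V}
    (h : ∀ a b, G.Adj a b → v = a ∨ v = b) : G.Colorable 2 := by
  classical
  exact ⟨Coloring.mk (fun a => if a = v then (0 : Fin 2) else 1) fun {a b} hab => by
    rcases h a b hab with rfl | rfl
    · simp [hab.ne.symm]
    · simp [hab.ne]⟩

/-- Colour `vᵢ` by the neighbour of the Helly point `p` through which the host tree reaches
the path `Pᵢ`. -/
theorem VPTRep.colorable {n k : ℕ} {G : SimpleGraph (Fin n)} {W : Type*} [Finite W]
    {T : SimpleGraph W} (R : VPTRep (hatG n G) T) (hdeg : ∀ x, (T.neighborSet x).ncard ≤ k)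
    (hmiss : ∀ i, ∃ a b, G.Adj a b ∧ i ≠ a ∧ i ≠ b) : G.Colorable k := by
  rcases isEmpty_or_nonempty (Fin n) with _ | ⟨⟨i₀⟩⟩
  · exact .of_isEmpty k
  obtain ⟨a, b, hab, -⟩ := hmiss i₀
  obtain ⟨p, hp⟩ := R.exists_forall_mem_path_inr hab
  choose br hbr hreach using fun i => (R.isPath (Sum.inl i)).exists_adj_forall_walk R.tree
    (VPTRep.notMem_path_inl hp (hmiss i))
  have := Fintype.ofFinite (T.neighborSet p)
  have hcard : Fintype.card (T.neighborSet p) ≤ k := by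
    rw [← Nat.card_eq_fintype_card, Nat.card_coe_set_eq]; exact hdeg p
  refine (Coloring.colorable (Coloring.mk (fun i => (⟨br i, hbr i⟩ : T.neighborSet p))
    fun {i j} hij h => ?_)).mono hcard
  have hbrij : br i = br j := congrArg Subtype.val h
  exact VPTRep.false_of_adj_of_forall_walk hp hij (hreach i) (hbrij ▸ hreach j)

theorem colorable_of_memH21 {n k : ℕ} {G : SimpleGraph (Fin n)} (hk : 2 ≤ k)
    (h : MemH21 (hatG n G) k) : G.Colorable k := by
  by_cases hstar : ∃ v, ∀ a b, G.Adj a b → v = a ∨ v = b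
  · obtain ⟨v, hv⟩ := hstar
    exact (SimpleGraph.colorable_two_of_forall_adj hv).mono hk
  push Not at hstar
  obtain ⟨N, T, R, hdeg⟩ := h
  exact R.colorable hdeg hstar

/-- A rooted tree given by its parent map; `depth` certifies that iterating `par` reaches
`root`. -/
structure ParentTree (W : Type*) where
  par : W → W
  root : W
  depth : W → ℕ
  par_root : par root = root
  depth_par_lt : ∀ x, x ≠ root → depth (par x) < depth x

namespace ParentTree

variable {W : Type*} (P : ParentTree W) {x y z : W}

def graph : SimpleGraph W := SimpleGraph.fromRel fun x y => P.par x = y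

lemma graph_adj : P.graph.Adj x y ↔ x ≠ y ∧ (P.par x = y ∨ P.par y = x) := fromRel_adj _ _ _

def ancestors (x : W) : Set W := {z | ∃ m, P.par^[m] x = z}

def children (x : W) : Set W := {c | P.par c = x ∧ c ≠ x}

lemma par_ne_self (hx : x ≠ P.root) : P.par x ≠ x := fun h =>
  (P.depth_par_lt x hx).ne (congrArg P.depth h)

lemma adj_par (hx : x ≠ P.root) : P.graph.Adj x (P.par x) :=
  P.graph_adj.mpr ⟨(P.par_ne_self hx).symm, Or.inl rfl⟩

lemma neighborSet_subset : P.graph.neighborSet x ⊆ insert (P.par x) (P.children x) := by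
  rintro z ⟨hne, h | h⟩
  · exact Or.inl h.symm
  · exact Or.inr ⟨h, hne.symm⟩

lemma neighborSet_root_subset : P.graph.neighborSet P.root ⊆ P.children P.root := by
  rintro z ⟨hne, h | h⟩
  · exact absurd (h.symm.trans P.par_root) hne.symm
  · exact ⟨h, hne.symm⟩

lemma mem_ancestors_self (x : W) : x ∈ P.ancestors x := ⟨0, rfl⟩

lemma ancestors_subset_of_forall_par_mem {S : Set W} (hS : ∀ z ∈ S, P.par z ∈ S)
    (hx : x ∈ S) : P.ancestors x ⊆ S := by
  rintro _ ⟨m, rfl⟩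
  induction m with
  | zero => exact hx
  | succ m ih => rw [Function.iterate_succ_apply']; exact hS _ ih

lemma par_mem_ancestors (hz : z ∈ P.ancestors x) : P.par z ∈ P.ancestors x := by
  obtain ⟨m, rfl⟩ := hz
  exact ⟨m + 1, Function.iterate_succ_apply' _ _ _⟩

lemma ancestors_subset (hz : z ∈ P.ancestors x) : P.ancestors z ⊆ P.ancestors x :=
  P.ancestors_subset_of_forall_par_mem (fun _ => P.par_mem_ancestors) hz

lemma mem_ancestors_par (hz : z ∈ P.ancestors x) (hne : z ≠ x) :
    z ∈ P.ancestors (P.par x) := by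
  obtain ⟨_ | m, rfl⟩ := hz
  · exact absurd rfl hne
  · exact ⟨m, (Function.iterate_succ_apply _ _ _).symm⟩

lemma depth_le_of_mem_ancestors (hz : z ∈ P.ancestors x) : P.depth z ≤ P.depth x := by
  refine P.ancestors_subset_of_forall_par_mem (S := {z | P.depth z ≤ P.depth x}) ?_
    (le_refl (P.depth x)) hz
  intro z hz
  rcases eq_or_ne z P.root with rfl | hr
  · rwa [P.par_root]
  · exact ((P.depth_par_lt z hr).trans_le hz).le

lemma mem_ancestors_or_mem_ancestors (hy : y ∈ P.ancestors x) (hz : z ∈ P.ancestors x) :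
    y ∈ P.ancestors z ∨ z ∈ P.ancestors y := by
  obtain ⟨a, rfl⟩ := hy
  obtain ⟨b, rfl⟩ := hz
  rcases le_total a b with h | h
  · exact Or.inr ⟨b - a, by rw [← Function.iterate_add_apply, Nat.sub_add_cancel h]⟩
  · exact Or.inl ⟨a - b, by rw [← Function.iterate_add_apply, Nat.sub_add_cancel h]⟩

lemma exists_walk_root (x : W) :
    ∃ w : P.graph.Walk x P.root, ∀ z ∈ w.support, z ∈ P.ancestors x := by
  induction hd : P.depth x using Nat.strong_induction_on generalizing x with
  | _ d ih =>
    rcases eq_or_ne x P.root with rfl | hx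
    · exact ⟨.nil, by simpa using P.mem_ancestors_self _⟩
    obtain ⟨w, hw⟩ := ih _ (hd ▸ P.depth_par_lt x hx) (P.par x) rfl
    refine ⟨.cons (P.adj_par hx) w, fun z hz => ?_⟩
    rcases List.mem_cons.mp (Walk.support_cons _ _ ▸ hz) with rfl | hz
    · exact P.mem_ancestors_self z
    · exact P.ancestors_subset (P.par_mem_ancestors (P.mem_ancestors_self x)) (hw z hz)

lemma root_mem_ancestors (x : W) :
    P.root ∈ P.ancestors x :=
  let ⟨w, hw⟩ := P.exists_walk_root x
  hw _ w.end_mem_support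

lemma exists_walk_of_ancestors_subset {S : Set W} (hS : ∀ z ∈ S, P.ancestors z ⊆ S)
    (hx : x ∈ S) (hy : y ∈ S) : ∃ w : P.graph.Walk x y, ∀ z ∈ w.support, z ∈ S := by
  obtain ⟨wx, hwx⟩ := P.exists_walk_root x
  obtain ⟨wy, hwy⟩ := P.exists_walk_root y
  refine ⟨wx.append wy.reverse, fun z hz => ?_⟩
  rw [Walk.mem_support_append_iff, Walk.support_reverse, List.mem_reverse] at hz
  exact hz.elim (fun hz => hS x hx (hwx z hz)) fun hz => hS y hy (hwy z hz)

lemma graph_connected : P.graph.Connected := by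
  have : Nonempty W := ⟨P.root⟩
  have h (x : W) : P.graph.Reachable x P.root := let ⟨w, _⟩ := P.exists_walk_root x; ⟨w⟩
  exact ⟨fun x y => (h x).trans (h y).symm⟩

/-- Each non-root vertex contributes exactly the edge to its parent. -/
lemma card_edgeSet_add_one [Finite W] : Nat.card P.graph.edgeSet + 1 = Nat.card W := by
  have hbij : Function.Bijective fun x : {x // x ≠ P.root} =>
      (⟨s(x.1, P.par x.1), P.adj_par x.2⟩ : P.graph.edgeSet) := by
    refine ⟨fun ⟨x, hx⟩ ⟨y, hy⟩ h => ?_, ?_⟩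
    · rcases Sym2.eq_iff.mp (congrArg Subtype.val h) with ⟨h, -⟩ | ⟨hxy, hyx⟩
      · exact Subtype.ext h
      · dsimp only at hxy hyx
        have hx' := P.depth_par_lt x hx
        have hy' := P.depth_par_lt y hy
        rw [hyx] at hx'
        rw [← hxy] at hy'
        omega
    · rintro ⟨e, he⟩
      induction e using Sym2.ind with
      | _ a b =>
        obtain ⟨hab, h | h⟩ := P.graph_adj.mp he
        · have ha : a ≠ P.root := fun ha => hab (by rw [← h, ha, P.par_root])
          exact ⟨⟨a, ha⟩, by simp [h]⟩
        · have hb : b ≠ P.root := fun hb => hab (by rw [← h, hb, P.par_root])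
          exact ⟨⟨b, hb⟩, by simp [h, Sym2.eq_swap]⟩
  rw [← Nat.card_congr (Equiv.ofBijective _ hbij), ← Set.ncard_univ W,
    ← Set.ncard_sdiff_singleton_add_one (Set.mem_univ P.root), ← Set.compl_eq_univ_sdiff,
    ← Nat.card_coe_set_eq]
  rfl

lemma graph_isTree [Finite W] : P.graph.IsTree :=
  isTree_iff_connected_and_card.mpr ⟨P.graph_connected, P.card_edgeSet_add_one⟩

/-- Two children of `z` among the ancestors of `x` would be ancestors of one another, and
the lower one would then lie above its own parent. -/
lemma children_inter_ancestors_subsingleton : (P.children z ∩ P.ancestors x).Subsingleton := by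
  suffices key : ∀ ⦃c₁ c₂⦄, c₁ ∈ P.children z → c₂ ∈ P.children z →
      c₁ ∈ P.ancestors c₂ → c₁ = c₂ by
    rintro c₁ ⟨h₁, hx₁⟩ c₂ ⟨h₂, hx₂⟩
    exact (P.mem_ancestors_or_mem_ancestors hx₁ hx₂).elim (key h₁ h₂)
      fun h => (key h₂ h₁ h).symm
  rintro c₁ c₂ ⟨hp₁, hne₁⟩ ⟨hp₂, -⟩ h
  by_contra hne
  have hc₁ : c₁ ≠ P.root := fun hr => hne₁ (by rw [← hp₁, hr, P.par_root])
  have := P.depth_le_of_mem_ancestors (hp₂ ▸ P.mem_ancestors_par h hne)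
  have := P.depth_par_lt c₁ hc₁
  rw [hp₁] at this
  omega

lemma ncard_neighborSet_inter_le_two [Finite W] {S : Set W}
    (hS : (P.children z ∩ S).Subsingleton) : (P.graph.neighborSet z ∩ S).ncard ≤ 2 :=
  calc (P.graph.neighborSet z ∩ S).ncard
      ≤ (insert (P.par z) (P.children z ∩ S)).ncard := Set.ncard_le_ncard fun c ⟨hc, hcS⟩ =>
        (P.neighborSet_subset hc).imp id fun hc => ⟨hc, hcS⟩
    _ ≤ (P.children z ∩ S).ncard + 1 := Set.ncard_insert_le _ _
    _ ≤ 2 := by have := Set.ncard_le_one_iff_subsingleton.mpr hS; omega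

lemma isPathSet_ancestors [Finite W] (x : W) : IsPathSet P.graph (P.ancestors x) :=
  ⟨⟨x, P.mem_ancestors_self x⟩,
    fun _ hy _ hz => P.exists_walk_of_ancestors_subset (fun _ => P.ancestors_subset) hy hz,
    fun _ _ => P.ncard_neighborSet_inter_le_two P.children_inter_ancestors_subsingleton⟩

lemma isPathSet_ancestors_union [Finite W] (hxy : P.ancestors x ∩ P.ancestors y ⊆ {P.root}) :
    IsPathSet P.graph (P.ancestors x ∪ P.ancestors y) := by
  refine ⟨⟨x, Or.inl (P.mem_ancestors_self x)⟩, fun _ ha _ hb =>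
    P.exists_walk_of_ancestors_subset (fun _ hz => hz.elim
      (fun hz => (P.ancestors_subset hz).trans Set.subset_union_left)
      (fun hz => (P.ancestors_subset hz).trans Set.subset_union_right)) ha hb, fun z hz => ?_⟩
  rcases eq_or_ne z P.root with rfl | hr
  · calc (P.graph.neighborSet P.root ∩ (P.ancestors x ∪ P.ancestors y)).ncard
        ≤ (P.children P.root ∩ P.ancestors x ∪ P.children P.root ∩ P.ancestors y).ncard :=
          Set.ncard_le_ncard fun c ⟨hc, hcS⟩ => by
            rw [← Set.inter_union_distrib_left]; exact ⟨P.neighborSet_root_subset hc, hcS⟩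
      _ ≤ 1 + 1 := (Set.ncard_union_le _ _).trans (add_le_add
          (Set.ncard_le_one_iff_subsingleton.mpr P.children_inter_ancestors_subsingleton)
          (Set.ncard_le_one_iff_subsingleton.mpr P.children_inter_ancestors_subsingleton))
  -- Away from the root, `z` has children in at most one of the two ancestor sets.
  have hchild {a b : W} (hza : z ∈ P.ancestors a)
      (hab : P.ancestors a ∩ P.ancestors b ⊆ {P.root}) :
      P.children z ∩ (P.ancestors a ∪ P.ancestors b) ⊆ P.children z ∩ P.ancestors a := by
    rintro c ⟨hc, hca | hcb⟩
    · exact ⟨hc, hca⟩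
    · exact absurd (hab ⟨hza, hc.1 ▸ P.par_mem_ancestors hcb⟩) hr
  apply P.ncard_neighborSet_inter_le_two
  rcases hz with hz | hz
  · exact P.children_inter_ancestors_subsingleton.anti (hchild hz hxy)
  · rw [Set.union_comm]
    exact P.children_inter_ancestors_subsingleton.anti (hchild hz (Set.inter_comm _ _ ▸ hxy))

lemma ncard_neighborSet_le [Finite W] (x : W) :
    (P.graph.neighborSet x).ncard ≤ (P.children x).ncard + 1 :=
  (Set.ncard_le_ncard P.neighborSet_subset).trans (Set.ncard_insert_le _ _)

lemma ncard_neighborSet_root_le [Finite W] :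
    (P.graph.neighborSet P.root).ncard ≤ (P.children P.root).ncard :=
  Set.ncard_le_ncard P.neighborSet_root_subset

end ParentTree

lemma Set.ncard_le_of_injOn_optionMap {α β : Type*} [Finite β] {s : Set (Option α)}
    (f : α → β) (hs : none ∉ s) (hf : s.InjOn (Option.map f)) : s.ncard ≤ Nat.card β :=
  calc s.ncard ≤ (Set.range (some : β → Option β)).ncard := by
        refine Set.ncard_le_ncard_of_injOn _ ?_ hf
        rintro (_ | a) ha
        · exact absurd ha hs
        · exact ⟨f a, rfl⟩
    _ = Nat.card β := Set.ncard_range_of_injective (Option.some_injective β)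

section Spider

variable {k n : ℕ}

/-- The parent map of the spider: `k` legs of `n` vertices hang from the root `none`;
`some (c, m, false)` is the `m`-th vertex of leg `c` and `some (c, m, true)` a leaf
attached to it. -/
def spiderPar : Option (Fin k × Fin n × Bool) → Option (Fin k × Fin n × Bool)
  | some (c, m, true) => some (c, m, false)
  | some (c, ⟨m + 1, hm⟩, false) => some (c, ⟨m, by omega⟩, false)
  | _ => none

def spider (k n : ℕ) : ParentTree (Option (Fin k × Fin n × Bool)) where
  par := spiderPar
  root := none
  depth z := z.elim 0 fun x => x.2.1 + 1 + x.2.2.toNat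
  par_root := rfl
  depth_par_lt := by rintro (_ | ⟨c, ⟨_ | m, hm⟩, _ | _⟩) h <;> simp [spiderPar] at h ⊢

lemma spider_ncard_neighborSet_le (hk : 3 ≤ k) (x : Option (Fin k × Fin n × Bool)) :
    ((spider k n).graph.neighborSet x).ncard ≤ k := by
  rcases x with _ | ⟨c, m, _ | _⟩
  · refine ((spider k n).ncard_neighborSet_root_le).trans ?_
    have := Set.ncard_le_of_injOn_optionMap (s := (spider k n).children none) Prod.fst
      (fun h => h.2 rfl) ?_
    · rw [Nat.card_fin] at this
      exact this
    rintro (_ | ⟨c₁, ⟨_ | m₁, h₁⟩, _ | _⟩) ⟨hp₁, -⟩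
      (_ | ⟨c₂, ⟨_ | m₂, h₂⟩, _ | _⟩) ⟨hp₂, -⟩ h <;> simp_all [spider, spiderPar]
  · refine ((spider k n).ncard_neighborSet_le _).trans ?_
    have := Set.ncard_le_of_injOn_optionMap (s := (spider k n).children (some (c, m, false)))
      (fun x => x.2.2) (fun h => by simp [spider, spiderPar, ParentTree.children] at h) ?_
    · rw [Nat.card_eq_fintype_card, Fintype.card_bool] at this
      omega
    rintro (_ | ⟨c₁, ⟨_ | m₁, h₁⟩, _ | _⟩) ⟨hp₁, -⟩
      (_ | ⟨c₂, ⟨_ | m₂, h₂⟩, _ | _⟩) ⟨hp₂, -⟩ h <;> simp_all [spider, spiderPar, Fin.ext_iff]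
  · refine ((spider k n).ncard_neighborSet_le _).trans ?_
    have : (spider k n).children (some (c, m, true)) = ∅ := by
      ext (_ | ⟨c', ⟨_ | m', h'⟩, _ | _⟩) <;> simp [spider, spiderPar, ParentTree.children]
    rw [this, Set.ncard_empty]
    omega

end Spider

section SpiderRep

variable {k n : ℕ} {G : SimpleGraph (Fin n)} (C : G.Coloring (Fin k))

def spiderLeaf (i : Fin n) : Option (Fin k × Fin n × Bool) := some (C i, i, true)

lemma spiderLeaf_injective : Function.Injective (spiderLeaf C) := fun i j h => by
  simp_all [spiderLeaf]

lemma spiderLeaf_mem_ancestors_iff {i j : Fin n} :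
    spiderLeaf C i ∈ (spider k n).ancestors (spiderLeaf C j) ↔ i = j := by
  refine ⟨fun ⟨m, hm⟩ => ?_, fun h => h ▸ (spider k n).mem_ancestors_self _⟩
  cases m with
  | zero => simp_all [spiderLeaf]
  | succ m =>
    rw [Function.iterate_succ_apply'] at hm
    generalize (spider k n).par^[m] (spiderLeaf C j) = z at hm
    rcases z with _ | ⟨c, ⟨_ | m, _⟩, _ | _⟩ <;> simp [spider, spiderPar, spiderLeaf] at hm

/-- The ancestors of a leaf stay on the leg of its colour. -/
lemma ancestors_spiderLeaf_inter_subset {i j : Fin n} (hij : C i ≠ C j) :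
    (spider k n).ancestors (spiderLeaf C i) ∩ (spider k n).ancestors (spiderLeaf C j) ⊆
      {(spider k n).root} := by
  have hleg (i : Fin n) : (spider k n).ancestors (spiderLeaf C i) ⊆
      {z | ∀ x, z = some x → x.1 = C i} := by
    refine (spider k n).ancestors_subset_of_forall_par_mem ?_ (by simp [spiderLeaf])
    rintro (_ | ⟨c, ⟨_ | m, _⟩, _ | _⟩) h <;> simp_all [spider, spiderPar]
  rintro (_ | x) ⟨hi, hj⟩
  · rfl
  · exact absurd ((hleg i hi x rfl).symm.trans (hleg j hj x rfl)) hij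

def spiderPath : HatIdx n G → Set (Option (Fin k × Fin n × Bool))
  | Sum.inl i => {spiderLeaf C i}
  | Sum.inr (Sum.inl e) =>
    (spider k n).ancestors (spiderLeaf C e.1.1) ∪ (spider k n).ancestors (spiderLeaf C e.1.2)
  | Sum.inr (Sum.inr i) => (spider k n).ancestors (spiderLeaf C i.1)

lemma isPathSet_spiderPath (u : HatIdx n G) : IsPathSet (spider k n).graph (spiderPath C u) := by
  rcases u with i | ⟨⟨_, -, hadj⟩⟩ | i
  · exact isPathSet_singleton _ _
  · exact (spider k n).isPathSet_ancestors_union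
      (ancestors_spiderLeaf_inter_subset C (C.valid hadj))
  · exact (spider k n).isPathSet_ancestors _

lemma spiderLeaf_mem_spiderPath_iff {i : Fin n} {u : HatIdx n G} :
    spiderLeaf C i ∈ spiderPath C u ↔ some i ∈ hatPath n G u := by
  rcases u with j | e | j <;>
    simp [spiderPath, hatPath, spiderLeaf_mem_ancestors_iff, (spiderLeaf_injective C).eq_iff]

lemma spiderPath_inl_inter_nonempty_iff {i : Fin n} {u : HatIdx n G} :
    (spiderPath C (Sum.inl i) ∩ spiderPath C u).Nonempty ↔
      (hatPath n G (Sum.inl i) ∩ hatPath n G u).Nonempty := by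
  change ({spiderLeaf C i} ∩ spiderPath C u).Nonempty ↔ ({some i} ∩ hatPath n G u).Nonempty
  rw [Set.singleton_inter_nonempty, Set.singleton_inter_nonempty, spiderLeaf_mem_spiderPath_iff]

lemma spiderPath_inter_nonempty_iff (u v : HatIdx n G) :
    (spiderPath C u ∩ spiderPath C v).Nonempty ↔
      (hatPath n G u ∩ hatPath n G v).Nonempty := by
  rcases u with i | u
  · exact spiderPath_inl_inter_nonempty_iff C
  rcases v with j | v
  · rw [Set.inter_comm, Set.inter_comm (hatPath _ _ _)]
    exact spiderPath_inl_inter_nonempty_iff C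
  have hroot (u) : (spider k n).root ∈ spiderPath C (Sum.inr u) := by
    rcases u with e | i
    · exact Or.inl ((spider k n).root_mem_ancestors _)
    · exact (spider k n).root_mem_ancestors _
  exact iff_of_true ⟨_, hroot u, hroot v⟩
    ⟨none, none_mem_hatPath_inr u, none_mem_hatPath_inr v⟩

def spiderRep : VPTRep (hatG n G) (spider k n).graph where
  tree := (spider k n).graph_isTree
  path := spiderPath C
  isPath := isPathSet_spiderPath C
  adj_iff u v huv := (and_iff_right huv).trans (spiderPath_inter_nonempty_iff C u v).symm

end SpiderRep

theorem memH21_of_colorable {n k : ℕ} {G : SimpleGraph (Fin n)} (hk : 3 ≤ k)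
    (hcol : G.Colorable k) : MemH21 (hatG n G) k :=
  let ⟨C⟩ := hcol
  (spiderRep C).memH21 (spider_ncard_neighborSet_le hk)

theorem stmt9_general (n : ℕ) (G : SimpleGraph (Fin n))
    (h : ℕ) (hh : 4 ≤ h) :
    (MemH21 (hatG n G) h ∧ ¬ MemH21 (hatG n G) (h - 1)) ↔
      G.chromaticNumber = (h : ℕ∞) := by
  have key {k : ℕ} (hk : 3 ≤ k) : MemH21 (hatG n G) k ↔ G.Colorable k :=
    ⟨colorable_of_memH21 (by omega), memH21_of_colorable hk⟩
  obtain ⟨m, rfl⟩ : ∃ m, h = m + 1 := ⟨h - 1, by omega⟩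
  rw [key (by omega), key (by omega), Nat.add_sub_cancel, Nat.cast_add_one,
    SimpleGraph.chromaticNumber_eq_iff_colorable_not_colorable]

/-- For a finite connected graph `G` on `Fin n` and any `h ≥ 4`, the
constructed graph `Ĝ = hatG n G` belongs to `[h,2,1] - [h-1,2,1]` iff `χ(G) = h`. -/
theorem stmt9 (n : ℕ) (G : SimpleGraph (Fin n)) (hconn : G.Connected)
    (h : ℕ) (hh : 4 ≤ h) :
    (MemH21 (hatG n G) h ∧ ¬ MemH21 (hatG n G) (h - 1)) ↔
      G.chromaticNumber = (h : ℕ∞) :=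
  stmt9_general n G h hh
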